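/- arXiv:math/9911062 — 2 statements merged into one kernel-verified Lean document; each statement's English description precedes it below -/
import Mathlib

section
/- If σ and τ are two skew-symmetric bilinear forms on a real vector space of dimension 2n with σ nondegenerate, then every eigenvalue of the linear operator σ⁻¹∘τ (viewed over ℂ) has even algebraic multiplicity; equivalently, the characteristic polynomial of σ⁻¹τ is the square of a polynomial of degree n. -/
open Matrix Polynomial



theorem skew_step {K : Type*} [Field K] [CharZero K] {m : Type*} [Fintype m] [DecidableEq m]
    (M : Matrix (Fin 2 ⊕ m) (Fin 2 ⊕ m) K) (hM : Mᵀ = -M)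
    (hb : M (Sum.inl 0) (Sum.inl 1) ≠ 0)
    (ih : ∀ S : Matrix m m K, Sᵀ = -S → ∃ d : K, S.det = d ^ 2) :
    ∃ d : K, M.det = d ^ 2 := by
  have hpt : ∀ i j, M j i = -M i j := fun i j => by
    have := congrFun (congrFun hM i) j
    simpa [Matrix.transpose_apply] using this
  have hdiag : ∀ i, M i i = 0 := fun i => by
    have h := hpt i i
    have h2 : (2 : K) * M i i = 0 := by linear_combination h
    rcases mul_eq_zero.mp h2 with h3 | h3
    · exact absurd h3 two_ne_zero
    · exact h3
  set A := M.toBlocks₁₁ with hA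
  set B := M.toBlocks₁₂ with hBdef
  set Cm := M.toBlocks₂₁ with hCdef
  set D := M.toBlocks₂₂ with hDdef
  set b := M (Sum.inl 0) (Sum.inl 1) with hbdef
  have hA00 : A 0 0 = 0 := hdiag (Sum.inl 0)
  have hA11 : A 1 1 = 0 := hdiag (Sum.inl 1)
  have hA10 : A 1 0 = -b := by
    simpa [hA, Matrix.toBlocks₁₁] using hpt (Sum.inl 0) (Sum.inl 1)
  have hA01 : A 0 1 = b := rfl
  have hdetA : A.det = b ^ 2 := by
    rw [Matrix.det_fin_two, hA00, hA11, hA01, hA10]; ring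
  have hAT : Aᵀ = -A := by
    ext i j; simpa [hA, Matrix.toBlocks₁₁] using hpt (Sum.inl i) (Sum.inl j)
  have hCT : Cm = -Bᵀ := by
    ext i j
    simpa [hCdef, hBdef, Matrix.toBlocks₂₁, Matrix.toBlocks₁₂] using hpt (Sum.inl j) (Sum.inr i)
  have hDT : Dᵀ = -D := by
    ext i j; simpa [hDdef, Matrix.toBlocks₂₂] using hpt (Sum.inr i) (Sum.inr j)
  haveI : Invertible A := A.invertibleOfIsUnitDet (by simp [hdetA]; exact hb)
  have e1 : (⅟A)ᵀ * Aᵀ = 1 := by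
    rw [← Matrix.transpose_mul, mul_invOf_self, Matrix.transpose_one]
  have h1 : (⅟A)ᵀ * A = -1 := by
    calc (⅟A)ᵀ * A = (⅟A)ᵀ * (-Aᵀ) := by rw [hAT, neg_neg]
      _ = -((⅟A)ᵀ * Aᵀ) := Matrix.mul_neg _ _
      _ = -1 := by rw [e1]
  have hNT : (⅟A)ᵀ = -⅟A := by
    calc (⅟A)ᵀ = (⅟A)ᵀ * (A * ⅟A) := by rw [mul_invOf_self, Matrix.mul_one]
      _ = ((⅟A)ᵀ * A) * ⅟A := by rw [Matrix.mul_assoc]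
      _ = (-1 : Matrix _ _ K) * ⅟A := by rw [h1]
      _ = -⅟A := by rw [Matrix.neg_mul, Matrix.one_mul]
  set S := D - Cm * ⅟A * B with hS
  have hST : Sᵀ = -S := by
    rw [hS, Matrix.transpose_sub, hDT, Matrix.transpose_mul, Matrix.transpose_mul, hNT, hCT]
    simp only [Matrix.transpose_neg, Matrix.transpose_transpose, Matrix.neg_mul, Matrix.mul_neg,
      neg_neg, Matrix.mul_assoc]
    noncomm_ring
  obtain ⟨d, hd⟩ := ih S hST
  refine ⟨b * d, ?_⟩
  have hblk := Matrix.det_fromBlocks₁₁ A B Cm D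
  rw [Matrix.fromBlocks_toBlocks] at hblk
  rw [hblk, hdetA, ← hS, hd]; ring



theorem skew_det_sq {K : Type*} [Field K] [CharZero K]
    (ihstep : ∀ {m : Type} [Fintype m] [DecidableEq m]
      (M : Matrix (Fin 2 ⊕ m) (Fin 2 ⊕ m) K), Mᵀ = -M →
      M (Sum.inl 0) (Sum.inl 1) ≠ 0 →
      (∀ S : Matrix m m K, Sᵀ = -S → ∃ d : K, S.det = d ^ 2) → ∃ d : K, M.det = d ^ 2) :
    ∀ (n : ℕ) (A : Matrix (Fin (2 * n)) (Fin (2 * n)) K), Aᵀ = -A → ∃ d : K, A.det = d ^ 2 := by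
  intro n
  induction n with
  | zero =>
    intro A hA
    refine ⟨1, ?_⟩
    haveI : IsEmpty (Fin (2 * 0)) := by rw [Nat.mul_zero]; infer_instance
    rw [Matrix.det_isEmpty]; norm_num
  | succ n ih =>
    intro A hA
    set e : Fin 2 ⊕ Fin (2 * n) ≃ Fin (2 * (n + 1)) :=
      finSumFinEquiv.trans (finCongr (by ring)) with he
    set B := A.submatrix e e with hB
    have hdet : B.det = A.det := Matrix.det_submatrix_equiv_self e A
    have hBskew : Bᵀ = -B := by
      ext i j
      have := congrFun (congrFun hA (e i)) (e j)
      simpa [hB, Matrix.transpose_apply, Matrix.submatrix_apply] using this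
    by_cases hrow : ∀ j, B (Sum.inl 0) j = 0
    · exact ⟨0, by rw [← hdet, Matrix.det_eq_zero_of_row_eq_zero (Sum.inl 0) hrow]; ring⟩
    · push_neg at hrow
      obtain ⟨j, hj⟩ := hrow
      have hj0 : j ≠ Sum.inl 0 := by
        rintro rfl
        have h := congrFun (congrFun hBskew (Sum.inl 0)) (Sum.inl 0)
        simp only [Matrix.transpose_apply, Matrix.neg_apply] at h
        have h2 : (2 : K) * B (Sum.inl 0) (Sum.inl 0) = 0 := by linear_combination h
        rcases mul_eq_zero.mp h2 with h3 | h3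
        · exact two_ne_zero h3
        · exact hj h3
      set s : (Fin 2 ⊕ Fin (2 * n)) ≃ (Fin 2 ⊕ Fin (2 * n)) := Equiv.swap (Sum.inl 1) j with hs
      set B' := B.submatrix s s with hB'
      have hdet' : B'.det = B.det := Matrix.det_submatrix_equiv_self s B
      have hB'skew : B'ᵀ = -B' := by
        ext i j'
        have := congrFun (congrFun hBskew (s i)) (s j')
        simpa [hB', Matrix.transpose_apply, Matrix.submatrix_apply] using this
      have hb' : B' (Sum.inl 0) (Sum.inl 1) ≠ 0 := by
        have h0 : s (Sum.inl 0) = Sum.inl 0 :=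
          Equiv.swap_apply_of_ne_of_ne (by simp) (Ne.symm hj0)
        have h1 : s (Sum.inl 1) = j := Equiv.swap_apply_left _ _
        simpa [hB', Matrix.submatrix_apply, h0, h1] using hj
      obtain ⟨d, hd⟩ := ihstep B' hB'skew hb' ih
      exact ⟨d, by rw [← hdet, ← hdet', hd]⟩

/-- If `σ, τ` are skew-symmetric real `2n × 2n` matrices with `σ` invertible,
then the characteristic polynomial of `σ⁻¹τ` is the square of a polynomial of degree `n`;
in particular every eigenvalue of `σ⁻¹τ` has even algebraic multiplicity. -/
theorem stmt1 (n : ℕ) (σ τ : Matrix (Fin (2 * n)) (Fin (2 * n)) ℝ)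
    (hσ : σ.transpose = -σ) (hτ : τ.transpose = -τ) (hinv : IsUnit σ.det) :
    ∃ q : Polynomial ℝ, q.degree = n ∧ Matrix.charpoly (σ⁻¹ * τ) = q ^ 2 := by
  classical
  set M := σ⁻¹ * τ with hM
  set p := Matrix.charpoly M with hp
  set f : Matrix (Fin (2 * n)) (Fin (2 * n)) ℝ → Matrix (Fin (2 * n)) (Fin (2 * n)) ℝ[X] :=
    fun N => N.map (C : ℝ →+* ℝ[X]) with hf
  have hcomm : ∀ N : Matrix (Fin (2 * n)) (Fin (2 * n)) ℝ[X],
      N * Matrix.scalar _ (X : ℝ[X]) = Matrix.scalar _ (X : ℝ[X]) * N := fun N => by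
    ext i j
    simp [Matrix.scalar_apply, Matrix.mul_diagonal, Matrix.diagonal_mul, mul_comm]
  set A : Matrix (Fin (2 * n)) (Fin (2 * n)) ℝ[X] :=
    Matrix.scalar _ (X : ℝ[X]) * f σ - f τ with hAdef
  have hmulM : f σ * f M = f τ := by
    have : σ * M = τ := Matrix.mul_nonsing_inv_cancel_left σ τ hinv
    rw [hf]; dsimp only
    rw [← Matrix.map_mul, this]
  have hA : f σ * Matrix.charmatrix M = A := by
    rw [Matrix.charmatrix, Matrix.mul_sub, RingHom.mapMatrix_apply, hcomm, hAdef, hmulM]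
  have hAdet : A.det = C σ.det * p := by
    rw [← hA, Matrix.det_mul, hp]
    congr 1
    rw [hf]; dsimp only
    rw [← RingHom.mapMatrix_apply, ← RingHom.map_det]
  have hmapT : ∀ N : Matrix (Fin (2 * n)) (Fin (2 * n)) ℝ, (f N)ᵀ = f Nᵀ := fun N => by
    rw [hf]; exact (Matrix.transpose_map).symm
  have hmapneg : ∀ N : Matrix (Fin (2 * n)) (Fin (2 * n)) ℝ, f (-N) = -f N := fun N => by
    rw [hf]; dsimp only
    rw [← RingHom.mapMatrix_apply, ← RingHom.mapMatrix_apply, map_neg]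
  have hAskew : Aᵀ = -A := by
    rw [hAdef, Matrix.transpose_sub, Matrix.transpose_mul, hmapT, hσ, hmapneg,
      Matrix.scalar_apply, Matrix.diagonal_transpose, ← Matrix.scalar_apply, hcomm,
      hmapT, hτ, hmapneg]
    simp only [Matrix.mul_neg, neg_neg]
    abel
  -- move to the fraction field
  set K := RatFunc ℝ
  haveI : CharZero K := charZero_of_injective_algebraMap
    (IsFractionRing.injective (Polynomial ℝ) K)
  set φ := algebraMap (Polynomial ℝ) K with hφ
  set A' := A.map φ with hA'
  have hA'skew : A'ᵀ = -A' := by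
    rw [hA']
    rw [← Matrix.transpose_map, hAskew]
    ext i j
    simp [Matrix.map_apply]
  obtain ⟨r, hr⟩ := skew_det_sq
    (fun {m} _ _ Mm h1 h2 h3 => skew_step Mm h1 h2 h3) n A' hA'skew
  have hφdet : φ A.det = r ^ 2 := by
    rw [RingHom.map_det, RingHom.mapMatrix_apply, ← hA', hr]
  have hint : IsIntegral (Polynomial ℝ) r :=
    ⟨Polynomial.X ^ 2 - Polynomial.C A.det, Polynomial.monic_X_pow_sub_C _ two_ne_zero, by
      simp only [Polynomial.eval₂_sub, Polynomial.eval₂_pow, Polynomial.eval₂_X,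
        Polynomial.eval₂_C]
      rw [← hφ, hφdet]; ring⟩
  obtain ⟨s, hs⟩ := IsIntegrallyClosed.isIntegral_iff.mp hint
  have hsq : C σ.det * p = s ^ 2 := by
    apply IsFractionRing.injective (Polynomial ℝ) K
    rw [_root_.map_mul, map_pow, hs, ← hφ, ← hφdet, hAdet, _root_.map_mul]
  -- now extract q
  have hσdet : σ.det ≠ 0 := hinv.ne_zero
  have hpmonic : p.Monic := Matrix.charpoly_monic M
  have hpdeg : p.natDegree = 2 * n := by
    rw [hp, Matrix.charpoly_natDegree_eq_dim, Fintype.card_fin]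
  have hpne : p ≠ 0 := hpmonic.ne_zero
  have hsne : s ≠ 0 := by
    intro h
    apply mul_ne_zero (Polynomial.C_ne_zero.mpr hσdet) hpne
    rw [hsq, h]; ring
  have hlcne : s.leadingCoeff ≠ 0 := Polynomial.leadingCoeff_ne_zero.mpr hsne
  have hlc : s.leadingCoeff ^ 2 = σ.det := by
    have h := congrArg Polynomial.leadingCoeff hsq
    rw [Polynomial.leadingCoeff_mul, Polynomial.leadingCoeff_C, hpmonic.leadingCoeff,
      Polynomial.leadingCoeff_pow, mul_one] at h
    exact h.symm
  have hsdeg : s.natDegree = n := by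
    have h := congrArg Polynomial.natDegree hsq
    rw [Polynomial.natDegree_C_mul hσdet, Polynomial.natDegree_pow, hpdeg] at h
    omega
  refine ⟨Polynomial.C (s.leadingCoeff)⁻¹ * s, ?_, ?_⟩
  · have hq0 : Polynomial.C (s.leadingCoeff)⁻¹ * s ≠ 0 :=
      mul_ne_zero (Polynomial.C_ne_zero.mpr (inv_ne_zero hlcne)) hsne
    rw [Polynomial.degree_eq_natDegree hq0, Polynomial.natDegree_C_mul (inv_ne_zero hlcne), hsdeg]
  · rw [mul_pow, ← map_pow, inv_pow, hlc]
    rw [← hsq]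
    rw [← mul_assoc, ← _root_.map_mul, inv_mul_cancel₀ hσdet, _root_.map_one, one_mul]
end

section
/- Let σ_k denote elementary symmetric polynomials. For variables φ₁,...,φₘ > 0 and multiplicities k₁,...,kₘ with k₁+⋯+kₘ = n, define σ_k^1 := σ_k of the multiset consisting of 1/φ₁ with multiplicity k₁−1 and 1/φ_l with multiplicity k_l for l ≥ 2. Then σ_k^1 = B_k + B_{k−1}σ₁(1/φ₂,...,1/φₘ) + ⋯ + B_{k−m+1}σ_{m−1}(1/φ₂,...,1/φₘ), where B_k := Σ_{|α|=k} C(k₁−1,α₁)⋯C(kₘ−1,αₘ) ∏_l φ_l^{−α_l}. -/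
/-!
Splitting one copy of each `1/φ_l`, `l ≠ 0`, off the multiset writes it as `T + {1/φ_l | l ≠ 0}`,
where `T` holds `1/φ_l` with multiplicity `k_l − 1` for every `l`. Through the generating function
`∏ (1 + x X)`, `σ_k` of a sum of multisets is the convolution of the `σ_j` of the summands, and
`σ_j` of `x` repeated `r` times is `C(r, j) xʲ`; hence `B_j = σ_j(T)`, and the identity is the
convolution for `T + {1/φ_l | l ≠ 0}`; the second summand has `m` elements, so its `σ_j` vanish
for `j > m`.
-/

open Polynomial Finset

namespace Multiset

variable {R : Type*} [CommSemiring R]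

theorem esymm_zero (s : Multiset R) : s.esymm 0 = 1 := by
  simp [esymm]

theorem esymm_eq_zero_of_card_lt (s : Multiset R) {n : ℕ} (h : card s < n) : s.esymm n = 0 := by
  simp [esymm, powersetCard_eq_empty _ h]

theorem esymm_cons_succ (a : R) (s : Multiset R) (n : ℕ) :
    (a ::ₘ s).esymm (n + 1) = s.esymm (n + 1) + a * s.esymm n := by
  simp only [esymm, powersetCard_cons, map_add, sum_add, map_map, Function.comp_def, prod_cons,
    sum_map_mul_left]

theorem coeff_prod_one_add_C_mul_X (s : Multiset R) (n : ℕ) :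
    (s.map fun r => 1 + C r * X).prod.coeff n = s.esymm n := by
  induction s using Multiset.induction generalizing n with
  | empty =>
    cases n with
    | zero => simp [esymm_zero]
    | succ n => simp [esymm_eq_zero_of_card_lt (0 : Multiset R) n.zero_lt_succ, coeff_one]
  | cons a s ih =>
    cases n with
    | zero => simp [esymm, mul_coeff_zero, ih 0]
    | succ n =>
      rw [map_cons, prod_cons, add_mul, one_mul, mul_assoc, coeff_add, coeff_C_mul, coeff_X_mul,
        ih, ih, esymm_cons_succ]

theorem esymm_add (s t : Multiset R) (n : ℕ) :
    (s + t).esymm n = ∑ p ∈ HasAntidiagonal.antidiagonal n, s.esymm p.1 * t.esymm p.2 := by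
  simp only [← coeff_prod_one_add_C_mul_X, map_add, prod_add, coeff_mul]

theorem esymm_replicate (r : ℕ) (a : R) (n : ℕ) :
    (replicate r a).esymm n = r.choose n * a ^ n := by
  have : (1 + C a * X) ^ r = ((1 + X) ^ r).comp (C a * X) := by
    simp [pow_comp]
  rw [← coeff_prod_one_add_C_mul_X, map_replicate, prod_replicate, this, comp_C_mul_X_coeff,
    coeff_one_add_X_pow]

theorem esymm_sum {ι : Type*} [DecidableEq ι] (s : Finset ι) (t : ι → Multiset R) (n : ℕ) :
    (∑ i ∈ s, t i).esymm n = ∑ f ∈ s.piAntidiag n, ∏ i ∈ s, (t i).esymm (f i) := by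
  induction s using Finset.cons_induction generalizing n with
  | empty =>
    cases n with
    | zero => simp [esymm_zero]
    | succ n => simp [esymm_eq_zero_of_card_lt (0 : Multiset R) n.zero_lt_succ]
  | cons i s hi ih =>
    rw [Finset.sum_cons, esymm_add, piAntidiag_cons, sum_disjiUnion]
    refine sum_congr rfl fun p _ => ?_
    rw [ih, mul_sum, sum_map]
    refine sum_congr rfl fun f hf => ?_
    have hfi : f i = 0 := by
      by_contra h
      exact hi ((mem_piAntidiag.1 hf).2 i h)
    rw [Finset.prod_cons]
    congr 1
    · simp [hfi]
    · refine prod_congr rfl fun j hj => ?_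
      have : j ≠ i := fun h => hi (h ▸ hj)
      simp [this]

end Multiset

theorem Finset.replicate_pred_add_sum_erase_replicate {ι α : Type*} [DecidableEq ι]
    {s : Finset ι} {i₀ : ι} (hi₀ : i₀ ∈ s) (r : ι → ℕ) (x : ι → α)
    (hr : ∀ i ∈ s.erase i₀, r i ≠ 0) :
    Multiset.replicate (r i₀ - 1) (x i₀) + ∑ i ∈ s.erase i₀, Multiset.replicate (r i) (x i)
      = ∑ i ∈ s, Multiset.replicate (r i - 1) (x i) + (s.erase i₀).val.map x := by
  have hsplit : ∀ i ∈ s.erase i₀,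
      Multiset.replicate (r i) (x i) = Multiset.replicate (r i - 1) (x i) + {x i} := by
    intro i hi
    obtain ⟨n, hn⟩ := Nat.exists_eq_succ_of_ne_zero (hr i hi)
    rw [hn, Multiset.replicate_succ, ← Multiset.singleton_add, add_comm, Nat.succ_sub_one]
  rw [sum_congr rfl hsplit, sum_add_distrib, ← add_assoc,
    add_sum_erase s (fun i => Multiset.replicate (r i - 1) (x i)) hi₀]
  congr 1
  simpa [sum_eq_multiset_sum] using Multiset.sum_map_singleton ((s.erase i₀).val.map x)

theorem Finset.Nat.sum_antidiagonal_mul_eq_sum_range {R : Type*} [NonUnitalNonAssocSemiring R]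
    (b e : ℕ → R) {k m : ℕ} (he : ∀ j, m < j → e j = 0) :
    ∑ p ∈ antidiagonal k, b p.1 * e p.2
      = ∑ j ∈ range (m + 1), (if j ≤ k then b (k - j) else 0) * e j := by
  set g : ℕ → R := fun j => (if j ≤ k then b (k - j) else 0) * e j
  calc ∑ p ∈ antidiagonal k, b p.1 * e p.2
      = ∑ j ∈ range (k + 1), g j := by
        rw [← Nat.sum_antidiagonal_swap]
        simp only [Prod.fst_swap, Prod.snd_swap]
        rw [Nat.sum_antidiagonal_eq_sum_range_succ (fun i j => b j * e i)]
        exact sum_congr rfl fun j hj => by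
          simp only [g, if_pos (Nat.lt_succ_iff.1 (mem_range.1 hj))]
    _ = ∑ j ∈ range (k + m + 1), g j :=
        (eventually_constant_sum (fun j hj => by simp [g, if_neg (by omega : ¬ j ≤ k)])
          (by omega)).symm
    _ = ∑ j ∈ range (m + 1), g j :=
        eventually_constant_sum (fun j hj => by simp [g, he j (by omega)]) (by omega)

theorem stmt10_general (m k : ℕ) (φ : Fin (m + 1) → ℝ) (kmult : Fin (m + 1) → ℕ)
    (hk : ∀ l, 1 ≤ kmult l)
    (B : ℕ → ℝ)
    (hB : ∀ j, B j = ∑ α ∈ Finset.Nat.antidiagonalTuple (m + 1) j,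
        ∏ l : Fin (m + 1), ((kmult l - 1).choose (α l) : ℝ) * (φ l)⁻¹ ^ α l) :
    (Multiset.replicate (kmult 0 - 1) (φ 0)⁻¹
        + ∑ l ∈ Finset.univ.erase (0 : Fin (m + 1)),
            Multiset.replicate (kmult l) (φ l)⁻¹).esymm k
      = ∑ j ∈ Finset.range (m + 1),
          (if j ≤ k then B (k - j) else 0) *
            (((Finset.univ.erase (0 : Fin (m + 1))).val.map fun l => (φ l)⁻¹).esymm j) := by
  have hB_esymm : ∀ j, B j = (∑ l, Multiset.replicate (kmult l - 1) (φ l)⁻¹).esymm j := by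
    intro j
    rw [hB, Multiset.esymm_sum, piAntidiag_univ_fin_eq_antidiagonalTuple]
    simp only [Multiset.esymm_replicate]
  have hcard_lt : ∀ j, m < j →
      ((Finset.univ.erase (0 : Fin (m + 1))).val.map fun l => (φ l)⁻¹).esymm j = 0 :=
    fun j hj => Multiset.esymm_eq_zero_of_card_lt _ (by simpa using hj)
  rw [Finset.replicate_pred_add_sum_erase_replicate (mem_univ 0) kmult (fun l => (φ l)⁻¹)
      (fun l _ => Nat.one_le_iff_ne_zero.1 (hk l)), Multiset.esymm_add]
  simp only [← hB_esymm]
  exact Finset.Nat.sum_antidiagonal_mul_eq_sum_range _ _ hcard_lt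

/-- For positive `φ₀,...,φₘ` (indexed by `Fin (m+1)`) with multiplicities
`k₀,...,kₘ ≥ 1` summing to `n`, let `σ_k^1` be the `k`-th elementary symmetric polynomial of
the multiset consisting of `1/φ₀` with multiplicity `k₀ − 1` and `1/φ_l` with multiplicity
`k_l` for `l ≥ 1`.  Then `σ_k^1 = Σ_{j=0}^{m} B_{k−j} σ_j(1/φ₁,...,1/φₘ)` (terms with `k−j < 0`
omitted), where `B_k = Σ_{|α|=k} C(k₀−1,α₀)⋯C(kₘ−1,αₘ) ∏_l φ_l^{−α_l}`. -/
theorem stmt10 (m n k : ℕ) (φ : Fin (m + 1) → ℝ) (kmult : Fin (m + 1) → ℕ)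
    (hφ : ∀ l, 0 < φ l) (hk : ∀ l, 1 ≤ kmult l) (hsum : ∑ l, kmult l = n)
    (B : ℕ → ℝ)
    (hB : ∀ j, B j = ∑ α ∈ Finset.Nat.antidiagonalTuple (m + 1) j,
        ∏ l : Fin (m + 1), ((kmult l - 1).choose (α l) : ℝ) * (φ l)⁻¹ ^ α l) :
    (Multiset.replicate (kmult 0 - 1) (φ 0)⁻¹
        + ∑ l ∈ Finset.univ.erase (0 : Fin (m + 1)),
            Multiset.replicate (kmult l) (φ l)⁻¹).esymm k
      = ∑ j ∈ Finset.range (m + 1),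
          (if j ≤ k then B (k - j) else 0) *
            (((Finset.univ.erase (0 : Fin (m + 1))).val.map fun l => (φ l)⁻¹).esymm j) :=
  stmt10_general m k φ kmult hk B hB
end
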